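/- arXiv:1601.03311 — 2 statements merged into one kernel-verified Lean document; each statement's English description precedes it below -/
import Mathlib

section
/- (Freedman's martingale inequality) Let Y_0, Y_1, ..., Y_n be a martingale with respect to a filtration, with increments bounded by M: |Y_k - Y_{k-1}| ≤ M almost surely, and let W_n = Σ_{k=1}^n E[(Y_k - Y_{k-1})² | F_{k-1}] be the predictable quadratic variation. Then for all λ ≥ 0 and σ² ≥ 0, P(|Y_n - Y_0| ≥ λ and W_n ≤ σ²) ≤ 2·exp(-λ²/(2(σ² + Mλ/3))). -/
/-!
For `|x| ≤ v < 3` the exponential series gives `exp x ≤ 1 + x + x² / (2 (1 - v/3))`, because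
`(k + 2)! ≥ 2 · 3ᵏ` makes its tail geometric. Since the increments `Δₖ = Yₖ₊₁ - Yₖ` have zero
conditional mean, this yields `E[exp (t Δₖ) | ℱₖ] ≤ exp (c E[Δₖ² | ℱₖ])` with
`c = t² / (2 (1 - t M / 3))`, so `exp (t (Yₙ - Y₀) - c Wₙ)` is a supermartingale and has
expectation at most `1`. Markov's inequality then bounds the probability of
`{Yₙ - Y₀ ≥ λ, Wₙ ≤ σ²}` by `exp (c σ² - t λ)`, and `t = λ / (σ² + M λ / 3)` turns this exponent
into `-λ² / (2 (σ² + M λ / 3))`. The same bound for `-Y` gives the factor `2`.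
-/

open MeasureTheory Real Finset
open scoped Nat

theorem Nat.two_mul_three_pow_le_factorial (n : ℕ) : 2 * 3 ^ n ≤ (n + 2)! := by
  simpa [add_comm n] using Nat.factorial_mul_pow_le_factorial (m := 2) (n := n)

theorem Real.exp_le_one_add_add_sq_div {x v : ℝ} (hx : |x| ≤ v) (hv : v < 3) :
    exp x ≤ 1 + x + x ^ 2 / (2 * (1 - v / 3)) := by
  have hv0 : 0 ≤ v := (abs_nonneg x).trans hx
  have hsum := Real.summable_pow_div_factorial x
  have htail_le : ∀ n : ℕ, x ^ (n + 2) / (n + 2)! ≤ x ^ 2 / 2 * (v / 3) ^ n := fun n => by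
    have hpow : x ^ (n + 2) ≤ x ^ 2 * v ^ n :=
      calc x ^ (n + 2) ≤ |x| ^ (n + 2) := (le_abs_self _).trans (abs_pow x _).le
        _ = x ^ 2 * |x| ^ n := by rw [pow_add, sq_abs, mul_comm]
        _ ≤ x ^ 2 * v ^ n := by gcongr
    have hfact : (2 * 3 ^ n : ℝ) ≤ (n + 2)! := by
      exact_mod_cast Nat.two_mul_three_pow_le_factorial n
    calc x ^ (n + 2) / (n + 2)! ≤ x ^ 2 * v ^ n / (2 * 3 ^ n) := by gcongr
      _ = x ^ 2 / 2 * (v / 3) ^ n := by rw [div_pow]; ring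
  have htail : ∑' n : ℕ, x ^ (n + 2) / (n + 2)! ≤ x ^ 2 / 2 * (1 - v / 3)⁻¹ :=
    hasSum_le htail_le ((summable_nat_add_iff 2).2 hsum).hasSum
      ((hasSum_geometric_of_lt_one (by positivity) (by linarith)).mul_left _)
  have hexp : exp x = 1 + x + ∑' n : ℕ, x ^ (n + 2) / (n + 2)! := by
    rw [exp_eq_exp_ℝ, NormedSpace.exp_eq_tsum_div]
    beta_reduce
    rw [← hsum.sum_add_tsum_nat_add 2]
    simp [Finset.sum_range_succ]
  calc exp x ≤ 1 + x + x ^ 2 / 2 * (1 - v / 3)⁻¹ := by rw [hexp]; linarith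
    _ = 1 + x + x ^ 2 / (2 * (1 - v / 3)) := by rw [← div_eq_mul_inv, div_div]

theorem Real.exp_mul_le_one_add_add_sq_mul {M t u : ℝ} (ht : 0 ≤ t) (htM : t * M < 3)
    (hu : |u| ≤ M) : exp (t * u) ≤ 1 + t * u + t ^ 2 / (2 * (1 - t * M / 3)) * u ^ 2 := by
  have htu : |t * u| ≤ t * M := by rw [abs_mul, abs_of_nonneg ht]; gcongr
  calc exp (t * u) ≤ 1 + t * u + (t * u) ^ 2 / (2 * (1 - t * M / 3)) :=
        exp_le_one_add_add_sq_div htu htM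
    _ = 1 + t * u + t ^ 2 / (2 * (1 - t * M / 3)) * u ^ 2 := by ring

theorem exists_freedman_exponent {M lam σ2 : ℝ} (hlam : 0 ≤ lam) (hσ2 : 0 ≤ σ2) :
    ∃ t c : ℝ, 0 ≤ t ∧ 0 ≤ c ∧ (∀ u, |u| ≤ M → exp (t * u) ≤ 1 + t * u + c * u ^ 2) ∧
      c * σ2 - t * lam ≤ -lam ^ 2 / (2 * (σ2 + M * lam / 3)) := by
  set D := σ2 + M * lam / 3 with hD_def
  rcases le_or_gt D 0 with hD | hD
  · refine ⟨0, 0, le_rfl, le_rfl, fun u _ => by simp, ?_⟩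
    simpa using div_nonneg_of_nonpos (neg_nonpos.2 (sq_nonneg lam)) (by linarith)
  suffices ∃ t, 0 ≤ t ∧ t * M < 3 ∧
      t ^ 2 / (2 * (1 - t * M / 3)) * σ2 - t * lam ≤ -lam ^ 2 / (2 * D) by
    obtain ⟨t, ht, htM, hexp⟩ := this
    exact ⟨t, _, ht, div_nonneg (sq_nonneg t) (by linarith),
      fun u hu => exp_mul_le_one_add_add_sq_mul ht htM hu, hexp⟩
  -- `t = λ / D` is the choice of Bernstein's inequality; for `σ² = 0` it would give `t M = 3`.
  rcases hσ2.eq_or_lt with rfl | hσ2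
  · have hMlam : 0 < M * lam := by linarith
    have hM : 0 < M := pos_of_mul_pos_left hMlam hlam
    have hlam_pos : 0 < lam := pos_of_mul_pos_right hMlam hM.le
    refine ⟨3 / (2 * M), by positivity, by field_simp; norm_num, le_of_eq ?_⟩
    rw [hD_def]
    field_simp
    ring
  · refine ⟨lam / D, by positivity, ?_, le_of_eq ?_⟩
    · rw [div_mul_eq_mul_div, div_lt_iff₀ hD]; linarith
    · have hdenom : 1 - lam / D * M / 3 = σ2 / D := by field_simp; linarith
      rw [hdenom]
      field_simp
      ring

namespace MeasureTheory

variable {Ω : Type*} {m0 : MeasurableSpace Ω} {μ : Measure Ω} {ℱ : Filtration ℕ m0}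

theorem integrable_exp_of_ae_le [IsFiniteMeasure μ] {f : Ω → ℝ}
    (hf : AEStronglyMeasurable f μ) {C : ℝ} (hC : ∀ᵐ ω ∂μ, f ω ≤ C) :
    Integrable (fun ω => exp (f ω)) μ := by
  refine .of_bound (continuous_exp.comp_aestronglyMeasurable hf) (exp C) ?_
  filter_upwards [hC] with ω h
  rwa [Real.norm_eq_abs, abs_of_pos (exp_pos _), exp_le_exp]

theorem condExp_exp_mul_le_exp_mul_condExp_sq [IsFiniteMeasure μ] {m : MeasurableSpace Ω}
    (hm : m ≤ m0) {X : Ω → ℝ} {M t c : ℝ} (hX : AEStronglyMeasurable[m0] X μ)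
    (hXM : ∀ᵐ ω ∂μ, |X ω| ≤ M) (hX0 : μ[X | m] =ᵐ[μ] 0)
    (hbound : ∀ u, |u| ≤ M → exp (t * u) ≤ 1 + t * u + c * u ^ 2) :
    μ[fun ω => exp (t * X ω) | m] ≤ᵐ[μ] fun ω => exp (c * μ[fun ω => X ω ^ 2 | m] ω) := by
  have hXi : Integrable X μ := .of_bound hX M (by simpa only [Real.norm_eq_abs] using hXM)
  have hX2i : Integrable (fun ω => X ω ^ 2) μ := by
    refine .of_bound (hX.pow 2) (M ^ 2) ?_
    filter_upwards [hXM] with ω h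
    rw [Real.norm_eq_abs, abs_pow]
    exact pow_le_pow_left₀ (abs_nonneg _) h 2
  set P : Ω → ℝ := (fun _ => 1) + t • X + c • fun ω => X ω ^ 2 with hP
  have hPi : Integrable P μ := ((integrable_const 1).add (hXi.smul t)).add (hX2i.smul c)
  have hexp_le : (fun ω => exp (t * X ω)) ≤ᵐ[μ] P := by
    filter_upwards [hXM] with ω h using hbound _ h
  have hexpi : Integrable (fun ω => exp (t * X ω)) μ := by
    refine hPi.mono' (continuous_exp.comp_aestronglyMeasurable (hX.const_mul t)) ?_
    filter_upwards [hexp_le] with ω h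
    rwa [Real.norm_eq_abs, abs_of_pos (exp_pos _)]
  have hP_condExp : μ[P | m] =ᵐ[μ]
      fun ω => 1 + t * μ[X | m] ω + c * μ[fun ω => X ω ^ 2 | m] ω := by
    filter_upwards [condExp_add ((integrable_const 1).add (hXi.smul t)) (hX2i.smul c) m,
      condExp_add (integrable_const 1) (hXi.smul t) m, condExp_smul t X m,
      condExp_smul c (fun ω => X ω ^ 2) m] with ω h1 h2 h3 h4
    simp [hP, h1, h2, h3, h4, condExp_const hm]
  filter_upwards [condExp_mono hexpi hPi hexp_le, hP_condExp, hX0] with ω h1 h2 h3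
  rw [h2, h3, Pi.zero_apply] at h1
  linarith [add_one_le_exp (c * μ[fun ω => X ω ^ 2 | m] ω)]

theorem Martingale.condExp_sub_ae_eq_zero [IsFiniteMeasure μ] {Y : ℕ → Ω → ℝ}
    (hY : Martingale Y ℱ μ) {i j : ℕ} (hij : i ≤ j) : μ[Y j - Y i | ℱ i] =ᵐ[μ] 0 := by
  filter_upwards [condExp_sub (hY.integrable j) (hY.integrable i) (ℱ i), hY.condExp_ae_eq hij]
    with ω h1 h2
  rw [h1, Pi.sub_apply, h2,
    condExp_of_stronglyMeasurable (ℱ.le i) (hY.stronglyAdapted i) (hY.integrable i),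
    Pi.zero_apply, sub_self]

section ExpSupermartingale

variable {X A : ℕ → Ω → ℝ}

theorem stronglyMeasurable_sum_range_sub (hX : ∀ k, StronglyMeasurable[ℱ (k + 1)] (X k))
    (hA : StronglyAdapted ℱ A) (n : ℕ) :
    StronglyMeasurable[ℱ n] fun ω => ∑ k ∈ range n, (X k ω - A k ω) := by
  refine Finset.stronglyMeasurable_fun_sum _ fun k hk => ?_
  have hkn : k + 1 ≤ n := Finset.mem_range.1 hk
  exact ((hX k).mono (ℱ.mono hkn)).sub ((hA k).mono (ℱ.mono (by omega)))

theorem integrable_exp_sum_range_sub [IsFiniteMeasure μ] {M : ℝ} {n : ℕ}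
    (hX : ∀ k, StronglyMeasurable[ℱ (k + 1)] (X k)) (hA : StronglyAdapted ℱ A)
    (hXM : ∀ k < n, ∀ᵐ ω ∂μ, X k ω ≤ M) (hA0 : ∀ k < n, ∀ᵐ ω ∂μ, 0 ≤ A k ω) :
    Integrable (fun ω => exp (∑ k ∈ range n, (X k ω - A k ω))) μ := by
  refine integrable_exp_of_ae_le
    ((stronglyMeasurable_sum_range_sub hX hA n).mono (ℱ.le n)).aestronglyMeasurable
    (C := n * M) ?_
  filter_upwards [ae_all_iff.2 fun k => Filter.eventually_imp_distrib_left.2 (hXM k),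
    ae_all_iff.2 fun k => Filter.eventually_imp_distrib_left.2 (hA0 k)] with ω hXω hAω
  calc ∑ k ∈ range n, (X k ω - A k ω) ≤ ∑ _k ∈ range n, M :=
        sum_le_sum fun k hk => by
          have hk := mem_range.1 hk
          linarith [hXω k hk, hAω k hk]
    _ = n * M := by simp

theorem integral_exp_sum_range_sub_le_one [IsProbabilityMeasure μ] {M : ℝ} {n : ℕ}
    (hX : ∀ k, StronglyMeasurable[ℱ (k + 1)] (X k)) (hA : StronglyAdapted ℱ A)
    (hXM : ∀ k < n, ∀ᵐ ω ∂μ, X k ω ≤ M) (hA0 : ∀ k < n, ∀ᵐ ω ∂μ, 0 ≤ A k ω)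
    (hXA : ∀ k < n, μ[fun ω => exp (X k ω) | ℱ k] ≤ᵐ[μ] fun ω => exp (A k ω)) :
    ∫ ω, exp (∑ k ∈ range n, (X k ω - A k ω)) ∂μ ≤ 1 := by
  induction n with
  | zero => simp
  | succ n ih =>
    set G : Ω → ℝ := fun ω => exp (∑ k ∈ range n, (X k ω - A k ω) - A n ω) with hG
    have hGm : StronglyMeasurable[ℱ n] G :=
      continuous_exp.comp_stronglyMeasurable
        ((stronglyMeasurable_sum_range_sub hX hA n).sub (hA n))
    have hsplit : (fun ω => exp (∑ k ∈ range (n + 1), (X k ω - A k ω)))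
        = G * fun ω => exp (X n ω) := by
      ext ω
      rw [Pi.mul_apply, hG, ← exp_add, sum_range_succ]
      ring_nf
    have hint_succ := integrable_exp_sum_range_sub hX hA hXM hA0
    have hXn_int : Integrable (fun ω => exp (X n ω)) μ :=
      integrable_exp_of_ae_le ((hX n).mono (ℱ.le (n + 1))).aestronglyMeasurable
        (hXM n n.lt_succ_self)
    calc ∫ ω, exp (∑ k ∈ range (n + 1), (X k ω - A k ω)) ∂μ
        = ∫ ω, μ[G * fun ω => exp (X n ω) | ℱ n] ω ∂μ := by
          rw [hsplit, integral_condExp (ℱ.le n)]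
      _ ≤ ∫ ω, exp (∑ k ∈ range n, (X k ω - A k ω)) ∂μ := by
          refine integral_mono_ae integrable_condExp
            (integrable_exp_sum_range_sub hX hA (fun k hk => hXM k (by omega))
              (fun k hk => hA0 k (by omega))) ?_
          filter_upwards [condExp_mul_of_stronglyMeasurable_left hGm (hsplit ▸ hint_succ) hXn_int,
            hXA n n.lt_succ_self] with ω h1 h2
          rw [h1, Pi.mul_apply]
          calc G ω * μ[fun ω => exp (X n ω) | ℱ n] ω ≤ G ω * exp (A n ω) := by gcongr
            _ = _ := by rw [hG, ← exp_add, sub_add_cancel]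
      _ ≤ 1 := ih (fun k hk => hXM k (by omega)) (fun k hk => hA0 k (by omega))
          (fun k hk => hXA k (by omega))

end ExpSupermartingale

variable [IsProbabilityMeasure μ] {Y : ℕ → Ω → ℝ} {n : ℕ} {M t c : ℝ}

theorem Martingale.measure_le_sub_and_sum_condExp_sq_le (hY : Martingale Y ℱ μ)
    (hM : ∀ k < n, ∀ᵐ ω ∂μ, |Y (k + 1) ω - Y k ω| ≤ M) (ht : 0 ≤ t) (hc : 0 ≤ c)
    (hbound : ∀ u, |u| ≤ M → exp (t * u) ≤ 1 + t * u + c * u ^ 2) (lam σ2 : ℝ) :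
    μ {ω | lam ≤ Y n ω - Y 0 ω ∧
        ∑ k ∈ range n, μ[fun ω' => (Y (k + 1) ω' - Y k ω') ^ 2 | ℱ k] ω ≤ σ2}
      ≤ ENNReal.ofReal (exp (c * σ2 - t * lam)) := by
  set W : ℕ → Ω → ℝ := fun k => μ[fun ω' => (Y (k + 1) ω' - Y k ω') ^ 2 | ℱ k]
  set Z : Ω → ℝ := fun ω => exp (∑ k ∈ range n, (t * (Y (k + 1) ω - Y k ω) - c * W k ω))
  have hZ_eq : ∀ ω, Z ω = exp (t * (Y n ω - Y 0 ω) - c * ∑ k ∈ range n, W k ω) :=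
    fun ω => by
    simp only [Z]
    rw [sum_sub_distrib, ← mul_sum, ← mul_sum, sum_range_sub (Y · ω)]
  have hincr : ∀ k, StronglyMeasurable[ℱ (k + 1)] (Y (k + 1) - Y k) := fun k =>
    (hY.stronglyAdapted (k + 1)).sub ((hY.stronglyAdapted k).mono (ℱ.mono k.le_succ))
  have hX : ∀ k, StronglyMeasurable[ℱ (k + 1)] fun ω => t * (Y (k + 1) ω - Y k ω) := fun k =>
    (hincr k).const_mul t
  have hA : StronglyAdapted ℱ fun k ω => c * W k ω := fun k =>
    stronglyMeasurable_condExp.const_mul c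
  have hXM : ∀ k < n, ∀ᵐ ω ∂μ, t * (Y (k + 1) ω - Y k ω) ≤ t * M := fun k hk => by
    filter_upwards [hM k hk] with ω h
    exact mul_le_mul_of_nonneg_left ((le_abs_self _).trans h) ht
  have hA0 : ∀ k < n, ∀ᵐ ω ∂μ, 0 ≤ c * W k ω := fun k _ => by
    filter_upwards [condExp_nonneg (m := ℱ k) (μ := μ) (Filter.Eventually.of_forall
      fun ω => sq_nonneg (Y (k + 1) ω - Y k ω))] with ω h
    exact mul_nonneg hc h
  have hZ_int : Integrable Z μ := integrable_exp_sum_range_sub hX hA hXM hA0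
  have hZ_le_one : ∫ ω, Z ω ∂μ ≤ 1 :=
    integral_exp_sum_range_sub_le_one hX hA hXM hA0 fun k hk =>
      condExp_exp_mul_le_exp_mul_condExp_sq (ℱ.le k)
        ((hincr k).mono (ℱ.le _)).aestronglyMeasurable (hM k hk)
        (hY.condExp_sub_ae_eq_zero k.le_succ) hbound
  have hsub : {ω | lam ≤ Y n ω - Y 0 ω ∧ ∑ k ∈ range n, W k ω ≤ σ2}
      ⊆ {ω | exp (t * lam - c * σ2) ≤ Z ω} := fun ω ⟨h1, h2⟩ => by
    show exp (t * lam - c * σ2) ≤ Z ω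
    rw [hZ_eq, exp_le_exp]
    linarith [mul_le_mul_of_nonneg_left h1 ht, mul_le_mul_of_nonneg_left h2 hc]
  have hmarkov := mul_meas_ge_le_integral_of_nonneg
    (Filter.Eventually.of_forall fun ω => (exp_pos _).le) hZ_int (exp (t * lam - c * σ2))
  calc _ ≤ μ {ω | exp (t * lam - c * σ2) ≤ Z ω} := measure_mono hsub
    _ = ENNReal.ofReal (μ.real {ω | exp (t * lam - c * σ2) ≤ Z ω}) :=
      (ofReal_measureReal).symm
    _ ≤ ENNReal.ofReal (exp (c * σ2 - t * lam)) := by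
      refine ENNReal.ofReal_le_ofReal ?_
      rw [show c * σ2 - t * lam = -(t * lam - c * σ2) by ring, exp_neg, inv_eq_one_div,
        le_div_iff₀' (exp_pos _)]
      exact hmarkov.trans hZ_le_one

theorem Martingale.measure_le_abs_sub_and_sum_condExp_sq_le (hY : Martingale Y ℱ μ)
    (hM : ∀ k < n, ∀ᵐ ω ∂μ, |Y (k + 1) ω - Y k ω| ≤ M) (ht : 0 ≤ t) (hc : 0 ≤ c)
    (hbound : ∀ u, |u| ≤ M → exp (t * u) ≤ 1 + t * u + c * u ^ 2) (lam σ2 : ℝ) :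
    μ {ω | lam ≤ |Y n ω - Y 0 ω| ∧
        ∑ k ∈ range n, μ[fun ω' => (Y (k + 1) ω' - Y k ω') ^ 2 | ℱ k] ω ≤ σ2}
      ≤ ENNReal.ofReal (2 * exp (c * σ2 - t * lam)) := by
  have hsq_neg : ∀ k, (fun ω => ((-Y) (k + 1) ω - (-Y) k ω) ^ 2)
      = fun ω => (Y (k + 1) ω - Y k ω) ^ 2 := fun k => funext fun ω => by
    simp only [Pi.neg_apply]; ring
  have hM_neg : ∀ k < n, ∀ᵐ ω ∂μ, |(-Y) (k + 1) ω - (-Y) k ω| ≤ M := fun k hk => by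
    simpa only [Pi.neg_apply, neg_sub_neg, abs_sub_comm] using hM k hk
  have hupper := hY.measure_le_sub_and_sum_condExp_sq_le hM ht hc hbound lam σ2
  have hlower := hY.neg.measure_le_sub_and_sum_condExp_sq_le hM_neg ht hc hbound lam σ2
  simp only [hsq_neg] at hlower
  set W : Ω → ℝ := fun ω => ∑ k ∈ range n, μ[fun ω' => (Y (k + 1) ω' - Y k ω') ^ 2 | ℱ k] ω
  have hsplit : {ω | lam ≤ |Y n ω - Y 0 ω| ∧ W ω ≤ σ2}
      ⊆ {ω | lam ≤ Y n ω - Y 0 ω ∧ W ω ≤ σ2} ∪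
        {ω | lam ≤ (-Y) n ω - (-Y) 0 ω ∧ W ω ≤ σ2} := by
    rintro ω ⟨hlam, hW⟩
    rcases le_abs'.1 hlam with h | h
    · exact Or.inr ⟨by simp only [Pi.neg_apply]; linarith, hW⟩
    · exact Or.inl ⟨h, hW⟩
  calc _ ≤ _ := measure_mono hsplit
    _ ≤ _ := measure_union_le _ _
    _ ≤ ENNReal.ofReal (exp (c * σ2 - t * lam)) + ENNReal.ofReal (exp (c * σ2 - t * lam)) :=
      add_le_add hupper hlower
    _ = ENNReal.ofReal (2 * exp (c * σ2 - t * lam)) := by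
      rw [← ENNReal.ofReal_add (exp_pos _).le (exp_pos _).le, two_mul]

end MeasureTheory

/-- Freedman's martingale inequality: for a martingale `Y` with increments bounded
by `M` and predictable quadratic variation `W n`, for all `λ ≥ 0`, `σ² ≥ 0`,
`P(|Yₙ - Y₀| ≥ λ and Wₙ ≤ σ²) ≤ 2 exp(-λ²/(2(σ² + Mλ/3)))`. -/
theorem freedman_inequality {Ω : Type*} {m0 : MeasurableSpace Ω}
    {μ : Measure Ω} [IsProbabilityMeasure μ]
    (ℱ : Filtration ℕ m0) (Y : ℕ → Ω → ℝ) (hY : Martingale Y ℱ μ)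
    (n : ℕ) (M : ℝ)
    (hM : ∀ k < n, ∀ᵐ ω ∂μ, |Y (k + 1) ω - Y k ω| ≤ M)
    (lam σ2 : ℝ) (hlam : 0 ≤ lam) (hσ2 : 0 ≤ σ2) :
    μ {ω | lam ≤ |Y n ω - Y 0 ω| ∧
        (∑ k ∈ Finset.range n,
          (μ[fun ω' => (Y (k + 1) ω' - Y k ω') ^ 2 | ℱ k]) ω) ≤ σ2}
      ≤ ENNReal.ofReal (2 * Real.exp (-lam ^ 2 / (2 * (σ2 + M * lam / 3)))) := by
  obtain ⟨t, c, ht, hc, hbound, hexponent⟩ := exists_freedman_exponent (M := M) hlam hσ2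
  calc _ ≤ ENNReal.ofReal (2 * exp (c * σ2 - t * lam)) :=
        hY.measure_le_abs_sub_and_sum_condExp_sq_le hM ht hc hbound lam σ2
    _ ≤ _ := ENNReal.ofReal_le_ofReal (by gcongr)
end

section
/- Let D_0, D_1, D_2, ... be a sequence of non-negative reals (energy deficits after successive phases), and let A_1, A_2, ... be non-negative reals with A_k ≥ D_k - 2 for all k (alive counts), and A_k non-increasing in k. Suppose D_{k+1} ≤ D_k - A_{k+1} + λ holds for k = 0, 1, ..., ℓ-1, where λ ≥ 1 and ℓ = 1 + ⌈3·log_{3/2}(D_0/λ)⌉ (interpreting ℓ = 1 if D_0 ≤ λ). Then A_ℓ < 2λ + 2. -/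
/-!
While at least `2λ + 2` elements are alive, a phase lowers the deficit by at least `λ + 2`,
and since the new deficit exceeds the alive count by at most `2`, it is at most `2/3` of the
old one. After `ℓ - 1 ≥ log_{3/2}(D₀/λ)` such phases the deficit is at most `λ`, so the
last phase can leave at most `2λ` elements alive.
-/

open Real

lemma deficit_le_two_thirds_of_alive_ge {d d' a lam : ℝ} (hrec : d' ≤ d - a + lam)
    (hd' : d' - 2 ≤ a) (ha : 2 * lam + 2 ≤ a) : d' ≤ 2 / 3 * d := by
  linarith

lemma inv_pow_mul_le_of_logb_div_le {b x lam : ℝ} {n : ℕ} (hb : 1 < b) (hlam : 0 < lam)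
    (h : logb b (x / lam) ≤ n) : b⁻¹ ^ n * x ≤ lam := by
  rw [inv_pow, inv_mul_le_iff₀ (pow_pos (by linarith) n)]
  rcases le_or_gt x 0 with hx | hx
  · have : 0 < b ^ n * lam := by positivity
    linarith
  · have := (logb_le_iff_le_rpow hb (div_pos hx hlam)).1 h
    rwa [rpow_natCast, div_le_iff₀ hlam] at this

theorem alive_count_shrinks_general (D A : ℕ → ℝ) (lam : ℝ) (hlam : 1 ≤ lam)
    (hD0 : ∀ k, 0 ≤ D k)
    (hAD : ∀ k, D k - 2 ≤ A k)
    (hAmono : ∀ k, A (k + 1) ≤ A k)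
    (ℓ : ℕ) (hℓ : ℓ = 1 + ⌈(3 : ℝ) * Real.logb (3 / 2) (D 0 / lam)⌉₊)
    (hrec : ∀ k < ℓ, D (k + 1) ≤ D k - A (k + 1) + lam) :
    A ℓ < 2 * lam + 2 := by
  set L := logb (3 / 2) (D 0 / lam)
  set n := ⌈3 * L⌉₊
  by_contra! hbig
  have halive : ∀ k ≤ ℓ, 2 * lam + 2 ≤ A k := fun k hk =>
    hbig.trans (antitone_nat_of_succ_le hAmono hk)
  have hdecay : D n ≤ (2 / 3) ^ n * D 0 := le_geom (by norm_num) n fun k hk =>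
    deficit_le_two_thirds_of_alive_ge (hrec k (by omega)) (hAD (k + 1)) (halive (k + 1) (by omega))
  have hL : L ≤ n := by
    have h3L : 3 * L ≤ n := Nat.le_ceil _
    have hn0 : (0 : ℝ) ≤ n := n.cast_nonneg
    rcases le_total 0 L with h | h <;> linarith
  have hDn : (2 / 3) ^ n * D 0 ≤ lam := by
    simpa [show (3 / 2 : ℝ)⁻¹ = 2 / 3 by norm_num] using
      inv_pow_mul_le_of_logb_div_le (by norm_num) (by linarith) hL
  have hlast := hrec n (by omega)
  rw [show n + 1 = ℓ by omega] at hlast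
  linarith [hD0 ℓ, halive ℓ le_rfl]

/-- If the non-negative energy deficits `D k` satisfy `D (k+1) ≤ D k - A (k+1) + λ`
for `k < ℓ`, the alive counts `A k` are non-negative, non-increasing and satisfy
`A k ≥ D k - 2`, where `λ ≥ 1` and `ℓ = 1 + ⌈3 log_{3/2}(D 0 / λ)⌉` (so `ℓ = 1`
when `D 0 ≤ λ`), then `A ℓ < 2λ + 2`. -/
theorem alive_count_shrinks (D A : ℕ → ℝ) (lam : ℝ) (hlam : 1 ≤ lam)
    (hD0 : ∀ k, 0 ≤ D k) (hA0 : ∀ k, 0 ≤ A k)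
    (hAD : ∀ k, D k - 2 ≤ A k)
    (hAmono : ∀ k, A (k + 1) ≤ A k)
    (ℓ : ℕ) (hℓ : ℓ = 1 + ⌈(3 : ℝ) * Real.logb (3 / 2) (D 0 / lam)⌉₊)
    (hrec : ∀ k < ℓ, D (k + 1) ≤ D k - A (k + 1) + lam) :
    A ℓ < 2 * lam + 2 :=
  alive_count_shrinks_general D A lam hlam hD0 hAD hAmono ℓ hℓ hrec
end
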